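/- Let f : ℝ² → ℝ be nonnegative, measurable, with f ∈ L¹(ℝ²) and √(f+1) ∈ H¹(ℝ²) (i.e. ∇√(f+1) ∈ L²). Then f ∈ L²(ℝ²) and ∫ f² ≤ ‖f‖_{L¹} + C·(‖f‖_{L¹} + 1)·‖∇√(f+1)‖²_{L²} for an absolute constant C, obtained by splitting the integral over {f < 1} and {f ≥ 1} and applying the Ladyzhenskaya (Gagliardo–Nirenberg) inequality in 2D. -/

import Mathlib

open MeasureTheory Real ENNReal

lemma exists_small {h : ℝ → ℝ} (hint : Integrable h)
    {ε : ℝ} (hε : 0 < ε) : ∃ a, h a < ε := by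
  by_contra hc
  push_neg at hc
  have : Integrable (fun _ : ℝ => ε) := hint.mono' aestronglyMeasurable_const
    (Filter.Eventually.of_forall fun x => by
      rw [Real.norm_eq_abs, abs_of_pos hε]; exact hc x)
  have := integrable_const_iff.mp this
  rcases this with h1 | h1
  · exact absurd h1 (ne_of_gt hε)
  · have := h1.measure_univ_lt_top; simp [Real.volume_univ] at this

lemma ftc_bound {φ φ' : ℝ → ℝ} (hd : ∀ x, HasDerivAt φ (φ' x) x)
    (hφ : Integrable φ) (hφ' : Integrable φ') (x : ℝ) : φ x ≤ ∫ t, |φ' t| := by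
  have key : ∀ ε > 0, φ x ≤ ε + ∫ t, |φ' t| := by
    intro ε hε
    obtain ⟨a, ha⟩ := exists_small hφ hε
    have hftc : ∫ t in a..x, φ' t = φ x - φ a :=
      intervalIntegral.integral_eq_sub_of_hasDerivAt (fun t _ => hd t)
        (hφ'.intervalIntegrable)
    have h1 : φ x = φ a + ∫ t in a..x, φ' t := by rw [hftc]; ring
    have h2 : ∫ t in a..x, φ' t ≤ ∫ t, |φ' t| := by
      calc ∫ t in a..x, φ' t ≤ |∫ t in a..x, φ' t| := le_abs_self _
        _ ≤ ∫ t in Set.uIoc a x, |φ' t| := by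
            simpa [Real.norm_eq_abs] using
              intervalIntegral.norm_integral_le_integral_norm_uIoc (f := φ') (a := a) (b := x)
        _ ≤ ∫ t, |φ' t| :=
            setIntegral_le_integral hφ'.abs (Filter.Eventually.of_forall fun t => abs_nonneg _)
    linarith
  by_contra hc
  push_neg at hc
  have := key ((φ x - ∫ t, |φ' t|) / 2) (by linarith)
  linarith

lemma lady {w : ℝ × ℝ → ℝ} (hw : Differentiable ℝ w)
    (hw2 : Integrable (fun p => w p ^ 2))
    (hd2 : Integrable (fun p => ‖fderiv ℝ w p‖ ^ 2)) :
    ∫⁻ p, ENNReal.ofReal (w p ^ 4) ≤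
      4 * (∫⁻ p, ENNReal.ofReal (w p ^ 2)) * ∫⁻ p, ENNReal.ofReal (‖fderiv ℝ w p‖ ^ 2) := by
  have hwc : Continuous w := hw.continuous
  have hwm : Measurable w := hwc.measurable
  have hfdm : Measurable (fderiv ℝ w) := measurable_fderiv ℝ w
  set H : ℝ × ℝ → ℝ := fun p => 2 * |w p| * ‖fderiv ℝ w p‖ with hH
  have hHm : Measurable H := (measurable_const.mul hwm.abs).mul hfdm.norm
  have hHnn : ∀ p, 0 ≤ H p := fun p => by positivity
  have hHint : Integrable H := by
    refine (hw2.add hd2).mono' hHm.aestronglyMeasurable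
      (Filter.Eventually.of_forall fun p => ?_)
    simp only [Pi.add_apply]
    rw [Real.norm_eq_abs, abs_of_nonneg (hHnn p)]
    show 2 * |w p| * ‖fderiv ℝ w p‖ ≤ _
    nlinarith [sq_nonneg (|w p| - ‖fderiv ℝ w p‖), sq_abs (w p)]
  -- slicewise bound, first coordinate moving
  set F : ℝ → ℝ≥0∞ := fun y => ∫⁻ t, ENNReal.ofReal (H (t, y)) with hF
  set G : ℝ → ℝ≥0∞ := fun x => ∫⁻ s, ENNReal.ofReal (H (x, s)) with hG
  have hwp : Integrable (fun p => w p ^ 2) (volume.prod volume) := by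
    rwa [← Measure.volume_eq_prod]
  have hHp : Integrable H (volume.prod volume) := by rwa [← Measure.volume_eq_prod]
  have key1 : ∀ᵐ y : ℝ, ∀ x, ENNReal.ofReal (w (x, y) ^ 2) ≤ F y := by
    filter_upwards [hwp.prod_left_ae, hHp.prod_left_ae] with y hIφ hIH
    intro x
    set φ' : ℝ → ℝ := fun t => 2 * w (t, y) * (fderiv ℝ w (t, y)) (1, 0) with hφ'
    have hder : ∀ t, HasDerivAt (fun t => w (t, y) ^ 2) (φ' t) t := by
      intro t
      have h1 : HasDerivAt (fun t : ℝ => (t, y)) ((1:ℝ), (0:ℝ)) t :=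
        (hasDerivAt_id t).prodMk (hasDerivAt_const t y)
      have h2 : HasDerivAt (fun t => w (t, y)) ((fderiv ℝ w (t, y)) (1, 0)) t :=
        (hw (t, y)).hasFDerivAt.comp_hasDerivAt t h1
      simpa [φ', mul_comm, mul_assoc, mul_left_comm] using h2.fun_pow 2
    have hbound : ∀ t, |φ' t| ≤ H (t, y) := by
      intro t
      have h3 : ‖((1:ℝ), (0:ℝ))‖ = 1 := by
        simp [Prod.norm_def]
      have h4 : |(fderiv ℝ w (t, y)) (1, 0)| ≤ ‖fderiv ℝ w (t, y)‖ := by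
        simpa [h3] using (fderiv ℝ w (t, y)).le_opNorm ((1:ℝ), (0:ℝ))
      calc |φ' t| = 2 * |w (t, y)| * |(fderiv ℝ w (t, y)) (1, 0)| := by
            rw [hφ']; rw [abs_mul, abs_mul]; simp [abs_of_nonneg]
        _ ≤ 2 * |w (t, y)| * ‖fderiv ℝ w (t, y)‖ := by
            have : (0:ℝ) ≤ 2 * |w (t, y)| := by positivity
            exact mul_le_mul_of_nonneg_left h4 this
        _ = H (t, y) := rfl
    have hφ'm : Measurable φ' := by
      have hm1 : Measurable (fun t : ℝ => (t, y)) := measurable_id.prodMk measurable_const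
      exact ((measurable_const.mul (hwm.comp hm1)).mul
        ((measurable_fderiv_apply_const ℝ w ((1:ℝ), (0:ℝ))).comp hm1))
    have hφ'int : Integrable φ' := by
      refine hIH.mono' hφ'm.aestronglyMeasurable (Filter.Eventually.of_forall fun t => ?_)
      rw [Real.norm_eq_abs]
      exact hbound t
    have hres : w (x, y) ^ 2 ≤ ∫ t, H (t, y) := by
      calc w (x, y) ^ 2 ≤ ∫ t, |φ' t| := ftc_bound hder hIφ hφ'int x
        _ ≤ ∫ t, H (t, y) := by
            refine integral_mono hφ'int.abs hIH fun t => ?_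
            exact (hbound t)
    calc ENNReal.ofReal (w (x, y) ^ 2) ≤ ENNReal.ofReal (∫ t, H (t, y)) :=
          ENNReal.ofReal_le_ofReal hres
      _ = F y := by
          rw [hF]
          exact ofReal_integral_eq_lintegral_ofReal hIH
            (Filter.Eventually.of_forall fun t => hHnn _)

  have key2 : ∀ᵐ x : ℝ, ∀ y, ENNReal.ofReal (w (x, y) ^ 2) ≤ G x := by
    filter_upwards [hwp.prod_right_ae, hHp.prod_right_ae] with x hIφ hIH
    intro y
    set φ' : ℝ → ℝ := fun s => 2 * w (x, s) * (fderiv ℝ w (x, s)) (0, 1) with hφ'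
    have hder : ∀ s, HasDerivAt (fun s => w (x, s) ^ 2) (φ' s) s := by
      intro s
      have h1 : HasDerivAt (fun s : ℝ => (x, s)) ((0:ℝ), (1:ℝ)) s :=
        (hasDerivAt_const s x).prodMk (hasDerivAt_id s)
      have h2 : HasDerivAt (fun s => w (x, s)) ((fderiv ℝ w (x, s)) (0, 1)) s :=
        (hw (x, s)).hasFDerivAt.comp_hasDerivAt s h1
      simpa [φ', mul_comm, mul_assoc, mul_left_comm] using h2.fun_pow 2
    have hbound : ∀ s, |φ' s| ≤ H (x, s) := by
      intro s
      have h3 : ‖((0:ℝ), (1:ℝ))‖ = 1 := by simp [Prod.norm_def]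
      have h4 : |(fderiv ℝ w (x, s)) (0, 1)| ≤ ‖fderiv ℝ w (x, s)‖ := by
        simpa [h3] using (fderiv ℝ w (x, s)).le_opNorm ((0:ℝ), (1:ℝ))
      calc |φ' s| = 2 * |w (x, s)| * |(fderiv ℝ w (x, s)) (0, 1)| := by
            rw [hφ']; rw [abs_mul, abs_mul]; simp [abs_of_nonneg]
        _ ≤ 2 * |w (x, s)| * ‖fderiv ℝ w (x, s)‖ := by
            have : (0:ℝ) ≤ 2 * |w (x, s)| := by positivity
            exact mul_le_mul_of_nonneg_left h4 this
        _ = H (x, s) := rfl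
    have hφ'm : Measurable φ' := by
      have hm1 : Measurable (fun s : ℝ => (x, s)) := measurable_const.prodMk measurable_id
      exact ((measurable_const.mul (hwm.comp hm1)).mul
        ((measurable_fderiv_apply_const ℝ w ((0:ℝ), (1:ℝ))).comp hm1))
    have hφ'int : Integrable φ' := by
      refine hIH.mono' hφ'm.aestronglyMeasurable (Filter.Eventually.of_forall fun s => ?_)
      rw [Real.norm_eq_abs]
      exact hbound s
    have hres : w (x, y) ^ 2 ≤ ∫ s, H (x, s) := by
      calc w (x, y) ^ 2 ≤ ∫ s, |φ' s| := ftc_bound hder hIφ hφ'int y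
        _ ≤ ∫ s, H (x, s) := integral_mono hφ'int.abs hIH fun s => hbound s
    calc ENNReal.ofReal (w (x, y) ^ 2) ≤ ENNReal.ofReal (∫ s, H (x, s)) :=
          ENNReal.ofReal_le_ofReal hres
      _ = G x := by
          rw [hG]
          exact ofReal_integral_eq_lintegral_ofReal hIH
            (Filter.Eventually.of_forall fun s => hHnn _)
  -- lift the slice bounds to the product space
  have l1 : ∀ᵐ p : ℝ × ℝ, ENNReal.ofReal (w p ^ 2) ≤ F p.2 := by
    rw [Measure.volume_eq_prod]
    filter_upwards [(Measure.quasiMeasurePreserving_snd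
      (μ := (volume : Measure ℝ)) (ν := (volume : Measure ℝ))).ae key1] with p hp
    simpa using hp p.1
  have l2 : ∀ᵐ p : ℝ × ℝ, ENNReal.ofReal (w p ^ 2) ≤ G p.1 := by
    rw [Measure.volume_eq_prod]
    filter_upwards [(Measure.quasiMeasurePreserving_fst
      (μ := (volume : Measure ℝ)) (ν := (volume : Measure ℝ))).ae key2] with p hp
    simpa using hp p.2
  set Hof : ℝ × ℝ → ℝ≥0∞ := fun p => ENNReal.ofReal (H p) with hHof
  have hHofm : Measurable Hof := hHm.ennreal_ofReal
  have hFm : Measurable F := Measurable.lintegral_prod_left (f := fun t y => Hof (t, y)) hHofm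
  have hGm : Measurable G := Measurable.lintegral_prod_right (f := fun x s => Hof (x, s)) hHofm
  have step1 : ∫⁻ p, ENNReal.ofReal (w p ^ 4) ≤ ∫⁻ p : ℝ × ℝ, G p.1 * F p.2 := by
    refine lintegral_mono_ae ?_
    filter_upwards [l1, l2] with p h1 h2
    have h3 : ENNReal.ofReal (w p ^ 4) = ENNReal.ofReal (w p ^ 2) * ENNReal.ofReal (w p ^ 2) := by
      rw [← ENNReal.ofReal_mul (by positivity)]; ring_nf
    rw [h3]
    exact mul_le_mul' h2 h1
  have step2 : ∫⁻ p : ℝ × ℝ, G p.1 * F p.2 = (∫⁻ x, G x) * ∫⁻ y, F y := by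
    rw [Measure.volume_eq_prod]
    exact lintegral_prod_mul hGm.aemeasurable hFm.aemeasurable
  have step3 : ∫⁻ y, F y = ∫⁻ p, Hof p := by
    conv_rhs => rw [Measure.volume_eq_prod]
    rw [lintegral_prod_symm Hof hHofm.aemeasurable]
  have step4 : ∫⁻ x, G x = ∫⁻ p, Hof p := by
    conv_rhs => rw [Measure.volume_eq_prod]
    rw [lintegral_prod Hof hHofm.aemeasurable]
  set X : ℝ≥0∞ := ∫⁻ p, ENNReal.ofReal (w p ^ 2) with hX
  set Y : ℝ≥0∞ := ∫⁻ p, ENNReal.ofReal (‖fderiv ℝ w p‖ ^ 2) with hY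
  have hCS : ∫⁻ p, Hof p ≤ 2 * (X ^ (1/2 : ℝ) * Y ^ (1/2 : ℝ)) := by
    have hexp : ∀ p, Hof p = 2 * (ENNReal.ofReal |w p| * ENNReal.ofReal ‖fderiv ℝ w p‖) := by
      intro p
      rw [hHof, hH]
      simp only []
      rw [ENNReal.ofReal_mul (by positivity), ENNReal.ofReal_mul (by norm_num)]
      norm_num [mul_assoc]
    calc ∫⁻ p, Hof p
        = 2 * ∫⁻ p, ENNReal.ofReal |w p| * ENNReal.ofReal ‖fderiv ℝ w p‖ := by
          simp only [hexp]
          rw [lintegral_const_mul 2 (hwm.abs.ennreal_ofReal.fun_mul hfdm.norm.ennreal_ofReal)]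
      _ ≤ 2 * (X ^ (1/2 : ℝ) * Y ^ (1/2 : ℝ)) := by
          gcongr
          have hc : Real.HolderConjugate 2 2 := Real.holderConjugate_iff.mpr ⟨one_lt_two, by norm_num⟩
          have := ENNReal.lintegral_mul_le_Lp_mul_Lq volume hc
            (hwm.abs.ennreal_ofReal.aemeasurable) (hfdm.norm.ennreal_ofReal.aemeasurable)
          simp only [Pi.mul_apply] at this
          refine le_trans this ?_
          have e1 : ∀ p : ℝ × ℝ, ENNReal.ofReal |w p| ^ (2:ℝ) = ENNReal.ofReal (w p ^ 2) := by
            intro p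
            rw [ENNReal.ofReal_rpow_of_nonneg (abs_nonneg _) (by norm_num : (0:ℝ) ≤ 2)]
            congr 1
            rw [show (2:ℝ) = ((2:ℕ):ℝ) by norm_num, Real.rpow_natCast, sq_abs]
          have e2 : ∀ p : ℝ × ℝ,
              ENNReal.ofReal ‖fderiv ℝ w p‖ ^ (2:ℝ) = ENNReal.ofReal (‖fderiv ℝ w p‖ ^ 2) := by
            intro p
            rw [ENNReal.ofReal_rpow_of_nonneg (norm_nonneg _) (by norm_num : (0:ℝ) ≤ 2)]
            congr 1
            rw [show (2:ℝ) = ((2:ℕ):ℝ) by norm_num, Real.rpow_natCast]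
          simp only [e1, e2, hX, hY]
          norm_num
  have hsq : ∀ Z : ℝ≥0∞, Z ^ (1/2 : ℝ) * Z ^ (1/2 : ℝ) = Z := by
    intro Z
    rw [← ENNReal.rpow_add_of_nonneg _ _ (by norm_num) (by norm_num)]
    norm_num
  calc ∫⁻ p, ENNReal.ofReal (w p ^ 4)
      ≤ ∫⁻ p : ℝ × ℝ, G p.1 * F p.2 := step1
    _ = (∫⁻ p, Hof p) * ∫⁻ p, Hof p := by rw [step2, step3, step4]
    _ ≤ (2 * (X ^ (1/2 : ℝ) * Y ^ (1/2 : ℝ))) * (2 * (X ^ (1/2 : ℝ) * Y ^ (1/2 : ℝ))) :=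
        mul_le_mul' hCS hCS
    _ = 4 * X * Y := by
        have : (2 * (X ^ (1/2 : ℝ) * Y ^ (1/2 : ℝ))) * (2 * (X ^ (1/2 : ℝ) * Y ^ (1/2 : ℝ)))
            = (2 * 2) * ((X ^ (1/2 : ℝ) * X ^ (1/2 : ℝ)) * (Y ^ (1/2 : ℝ) * Y ^ (1/2 : ℝ))) := by
          ring
        rw [this, hsq X, hsq Y, show (2 * 2 : ℝ≥0∞) = 4 by norm_num, mul_assoc]

noncomputable def eqv : (ℝ × ℝ) ≃L[ℝ] EuclideanSpace ℝ (Fin 2) :=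
  (ContinuousLinearEquiv.finTwoArrow ℝ ℝ).symm.trans
    (PiLp.continuousLinearEquiv 2 ℝ (fun _ : Fin 2 => ℝ)).symm

lemma eqv_mp : MeasurePreserving (⇑eqv) (volume : Measure (ℝ × ℝ)) volume := by
  have h1 := (volume_preserving_finTwoArrow ℝ).symm
  have h2 := (EuclideanSpace.volume_preserving_symm_measurableEquiv_toLp (Fin 2)).symm
  have h3 := h2.comp h1
  have : ⇑eqv = (MeasurableEquiv.toLp 2 (Fin 2 → ℝ)).symm.symm ∘
      (MeasurableEquiv.finTwoArrow (α := ℝ)).symm := by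
    funext p
    rfl
  rw [this]
  exact h3

lemma eqv_norm_le (p : ℝ × ℝ) : ‖eqv p‖ ≤ 2 * ‖p‖ := by
  have h1 : ‖eqv p‖ = Real.sqrt (p.1 ^ 2 + p.2 ^ 2) := by
    rw [EuclideanSpace.norm_eq]
    congr 1
    rw [Fin.sum_univ_two]
    norm_num [eqv, Real.norm_eq_abs, sq_abs]
  have h2 : ‖p.1‖ ≤ ‖p‖ := norm_fst_le p
  have h3 : ‖p.2‖ ≤ ‖p‖ := norm_snd_le p
  have h4 : p.1 ^ 2 + p.2 ^ 2 ≤ (2 * ‖p‖) ^ 2 := by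
    have e1 : p.1 ^ 2 = ‖p.1‖ ^ 2 := by rw [Real.norm_eq_abs, sq_abs]
    have e2 : p.2 ^ 2 = ‖p.2‖ ^ 2 := by rw [Real.norm_eq_abs, sq_abs]
    nlinarith [norm_nonneg p.1, norm_nonneg p.2, norm_nonneg p]
  rw [h1]
  calc Real.sqrt (p.1 ^ 2 + p.2 ^ 2) ≤ Real.sqrt ((2 * ‖p‖) ^ 2) := Real.sqrt_le_sqrt h4
    _ = 2 * ‖p‖ := Real.sqrt_sq (by positivity)

lemma eqv_opNorm_le : ‖(eqv : (ℝ × ℝ) ≃L[ℝ] EuclideanSpace ℝ (Fin 2)).toContinuousLinearMap‖ ≤ 2 :=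
  ContinuousLinearMap.opNorm_le_bound _ (by norm_num) fun p => eqv_norm_le p

lemma pt {t s : ℝ} (ht : 0 ≤ t) (hs1 : 1 ≤ s) (hs2 : s ^ 2 = t + 1) :
    t ^ 2 ≤ t + 36 * (s - 1) ^ 4 := by
  rcases le_or_gt t 1 with h | h
  · nlinarith [sq_nonneg ((s - 1) ^ 2)]
  · have hs14 : 1.4 ≤ s := by nlinarith
    have h5 : 0 ≤ 5 * (s - 1) - 2 := by linarith
    have h7 : 0 ≤ 7 * (s - 1) + 2 := by linarith
    nlinarith [mul_nonneg (mul_nonneg (sq_nonneg (s - 1)) h5) h7]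


/-- From the entropy estimate to the `L²` bound on the density: if `f ≥ 0` is integrable
on `ℝ²` and `√(f+1)` is differentiable with gradient in `L²`, then `f ∈ L²` and
`∫ f² ≤ ‖f‖_{L¹} + C (‖f‖_{L¹}+1) ‖∇√(f+1)‖²_{L²}` for an absolute constant `C`. -/
theorem lsq_bound_of_entropy :
    ∃ C : ℝ, 0 < C ∧
      ∀ f : EuclideanSpace ℝ (Fin 2) → ℝ, (∀ x, 0 ≤ f x) → Integrable f →
        Differentiable ℝ (fun x => Real.sqrt (f x + 1)) →
        MemLp (fun x => gradient (fun y => Real.sqrt (f y + 1)) x) 2 volume →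
        MemLp f 2 volume ∧
          ∫ x, (f x) ^ 2 ≤ (∫ x, f x) + C * ((∫ x, f x) + 1) *
            ((eLpNorm (fun x => gradient (fun y => Real.sqrt (f y + 1)) x) 2 volume).toReal) ^ 2 := by
  refine ⟨576, by norm_num, fun f hnn hf hgd hgrad => ?_⟩
  set g : EuclideanSpace ℝ (Fin 2) → ℝ := fun x => Real.sqrt (f x + 1) with hgdef
  set w : EuclideanSpace ℝ (Fin 2) → ℝ := fun x => g x - 1 with hwdef
  -- pointwise facts
  have hg1 : ∀ x, 1 ≤ g x := by
    intro x
    have h := Real.sqrt_le_sqrt (show (1:ℝ) ≤ f x + 1 by linarith [hnn x])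
    rwa [Real.sqrt_one] at h
  have hgsq : ∀ x, g x ^ 2 = f x + 1 := fun x => Real.sq_sqrt (by linarith [hnn x])
  have hwnn : ∀ x, 0 ≤ w x := fun x => by
    have := hg1 x; show 0 ≤ g x - 1; linarith
  have hw2f : ∀ x, w x ^ 2 ≤ f x := by
    intro x; have h1 := hg1 x; have h2 := hgsq x; show (g x - 1) ^ 2 ≤ f x; nlinarith
  have hpt : ∀ x, f x ^ 2 ≤ f x + 36 * w x ^ 4 := fun x => pt (hnn x) (hg1 x) (hgsq x)
  -- differentiability and measurability
  have hwd : Differentiable ℝ w := hgd.sub_const 1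
  have hwc : Continuous w := hwd.continuous
  have hfw_eq : ∀ x, fderiv ℝ w x = fderiv ℝ g x := fun x => fderiv_sub_const 1
  have hgradnorm : ∀ x, ‖fderiv ℝ g x‖ = ‖gradient g x‖ := fun x =>
    ((InnerProductSpace.toDual ℝ (EuclideanSpace ℝ (Fin 2))).symm.norm_map (fderiv ℝ g x)).symm
  have hgradm : Measurable (fun x => gradient g x) :=
    ((InnerProductSpace.toDual ℝ (EuclideanSpace ℝ (Fin 2))).symm.continuous.measurable).comp (measurable_fderiv ℝ g)
  -- integrability on E
  have hw2m : AEStronglyMeasurable (fun x => w x ^ 2) (volume : Measure (EuclideanSpace ℝ (Fin 2))) :=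
    ((hwc.pow 2).aestronglyMeasurable)
  have hw2int : Integrable (fun x => w x ^ 2) (volume : Measure (EuclideanSpace ℝ (Fin 2))) := by
    refine hf.mono' hw2m (Filter.Eventually.of_forall fun x => ?_)
    rw [Real.norm_eq_abs, abs_of_nonneg (by positivity)]
    exact hw2f x
  have hgradsqm : AEStronglyMeasurable (fun x => ‖gradient g x‖ ^ 2) (volume : Measure (EuclideanSpace ℝ (Fin 2))) :=
    ((hgradm.norm.pow_const 2).aestronglyMeasurable)
  have hgradsq_int : Integrable (fun x => ‖gradient g x‖ ^ 2) (volume : Measure (EuclideanSpace ℝ (Fin 2))) := by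
    have h1 := hgrad.integrable_norm_rpow (by norm_num) (by norm_num)
    refine h1.congr (Filter.Eventually.of_forall fun x => ?_)
    have h2 : ((2:ℝ≥0∞)).toReal = (2:ℝ) := by norm_num
    simp only [h2, Real.rpow_two]
  -- transfer to ℝ × ℝ
  set v : ℝ × ℝ → ℝ := fun p => w (eqv p) with hvdef
  have hvd : Differentiable ℝ v := hwd.comp eqv.differentiable
  have hv2int : Integrable (fun p => v p ^ 2) (volume : Measure (ℝ × ℝ)) :=
    (eqv_mp.integrable_comp hw2m).mpr hw2int
  have hvd_bound : ∀ p, ‖fderiv ℝ v p‖ ≤ 2 * ‖gradient g (eqv p)‖ := by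
    intro p
    have hcomp : fderiv ℝ v p = (fderiv ℝ w (eqv p)).comp eqv.toContinuousLinearMap := by
      exact ((hwd (eqv p)).hasFDerivAt.comp p eqv.hasFDerivAt).fderiv
    rw [hcomp]
    calc ‖(fderiv ℝ w (eqv p)).comp eqv.toContinuousLinearMap‖
        ≤ ‖fderiv ℝ w (eqv p)‖ * ‖eqv.toContinuousLinearMap‖ :=
          ContinuousLinearMap.opNorm_comp_le _ _
      _ ≤ ‖fderiv ℝ w (eqv p)‖ * 2 :=
          mul_le_mul_of_nonneg_left eqv_opNorm_le (norm_nonneg _)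
      _ = 2 * ‖gradient g (eqv p)‖ := by
          rw [hfw_eq, hgradnorm, mul_comm]
  have hvfd_int : Integrable (fun p => ‖fderiv ℝ v p‖ ^ 2) (volume : Measure (ℝ × ℝ)) := by
    have hdom : Integrable (fun p => 4 * ‖gradient g (eqv p)‖ ^ 2) (volume : Measure (ℝ × ℝ)) :=
      ((eqv_mp.integrable_comp hgradsqm).mpr hgradsq_int).const_mul 4
    refine hdom.mono' ((measurable_fderiv ℝ v).norm.pow_const 2).aestronglyMeasurable
      (Filter.Eventually.of_forall fun p => ?_)
    rw [Real.norm_eq_abs, abs_of_nonneg (by positivity)]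
    nlinarith [hvd_bound p, norm_nonneg (fderiv ℝ v p), norm_nonneg (gradient g (eqv p))]
  -- apply Ladyzhenskaya on ℝ × ℝ
  have L := lady hvd hv2int hvfd_int
  -- transfer lintegrals back to E
  set A : ℝ≥0∞ := ∫⁻ x : EuclideanSpace ℝ (Fin 2), ENNReal.ofReal (w x ^ 2) with hA
  set B : ℝ≥0∞ := ∫⁻ x : EuclideanSpace ℝ (Fin 2), ENNReal.ofReal (‖gradient g x‖ ^ 2) with hB
  set W4 : ℝ≥0∞ := ∫⁻ x : EuclideanSpace ℝ (Fin 2), ENNReal.ofReal (w x ^ 4) with hW4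
  have t1 : ∫⁻ p, ENNReal.ofReal (v p ^ 2) = A :=
    eqv_mp.lintegral_comp ((hwc.pow 2).measurable.ennreal_ofReal)
  have t2 : ∫⁻ p, ENNReal.ofReal (v p ^ 4) = W4 :=
    eqv_mp.lintegral_comp ((hwc.pow 4).measurable.ennreal_ofReal)
  have t3 : ∫⁻ p, ENNReal.ofReal (‖fderiv ℝ v p‖ ^ 2) ≤ 4 * B := by
    calc ∫⁻ p, ENNReal.ofReal (‖fderiv ℝ v p‖ ^ 2)
        ≤ ∫⁻ p, ENNReal.ofReal (4 * ‖gradient g (eqv p)‖ ^ 2) := by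
          refine lintegral_mono fun p => ENNReal.ofReal_le_ofReal ?_
          nlinarith [hvd_bound p, norm_nonneg (fderiv ℝ v p), norm_nonneg (gradient g (eqv p))]
      _ = ∫⁻ p, 4 * ENNReal.ofReal (‖gradient g (eqv p)‖ ^ 2) := by
          congr 1; funext p
          rw [ENNReal.ofReal_mul (by norm_num)]
          norm_num
      _ = 4 * ∫⁻ p, ENNReal.ofReal (‖gradient g (eqv p)‖ ^ 2) := by
          exact lintegral_const_mul 4 ((hgradm.norm.pow_const 2).ennreal_ofReal.comp
            eqv_mp.measurable)
      _ = 4 * B := by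
          rw [eqv_mp.lintegral_comp ((hgradm.norm.pow_const 2).ennreal_ofReal)]
  have hmain : W4 ≤ 16 * A * B := by
    rw [← t2]
    calc ∫⁻ p, ENNReal.ofReal (v p ^ 4)
        ≤ 4 * (∫⁻ p, ENNReal.ofReal (v p ^ 2)) * ∫⁻ p, ENNReal.ofReal (‖fderiv ℝ v p‖ ^ 2) := L
      _ ≤ 4 * A * (4 * B) := by
          rw [t1]
          exact mul_le_mul_right t3 (4 * A)
      _ = 16 * A * B := by ring
  -- finiteness
  have hAle : A ≤ ENNReal.ofReal (∫ x, f x) := by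
    rw [ofReal_integral_eq_lintegral_ofReal hf (Filter.Eventually.of_forall hnn)]
    exact lintegral_mono fun x => ENNReal.ofReal_le_ofReal (hw2f x)
  have hAfin : A ≠ ∞ := (lt_of_le_of_lt hAle ENNReal.ofReal_lt_top).ne
  -- relate B to the eLpNorm
  set S : ℝ≥0∞ := eLpNorm (fun x => gradient g x) 2 volume with hS
  have hBS : B = S ^ 2 := by
    rw [hS, eLpNorm_eq_lintegral_rpow_enorm_toReal (by norm_num) (by norm_num)]
    have e1 : ∀ x : EuclideanSpace ℝ (Fin 2),
        ‖gradient g x‖ₑ ^ ((2:ℝ≥0∞)).toReal = ENNReal.ofReal (‖gradient g x‖ ^ 2) := by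
      intro x
      rw [show ((2:ℝ≥0∞)).toReal = ((2:ℕ):ℝ) by norm_num, ENNReal.rpow_natCast,
        ← ofReal_norm, ← ENNReal.ofReal_pow (norm_nonneg _)]
    simp only [e1]
    rw [← ENNReal.rpow_natCast (_ ^ (1 / ((2:ℝ≥0∞)).toReal)) 2, ← ENNReal.rpow_mul]
    norm_num
    rw [hB]
    exact lintegral_congr fun x => (e1 x).symm.trans (by norm_num)
  have hSfin : S ≠ ∞ := hgrad.2.ne
  have hBfin : B ≠ ∞ := by rw [hBS]; exact (ENNReal.pow_ne_top hSfin)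
  have hW4fin : W4 ≠ ∞ := by
    refine (lt_of_le_of_lt hmain ?_).ne
    exact ENNReal.mul_lt_top (ENNReal.mul_lt_top (by norm_num) hAfin.lt_top) hBfin.lt_top
  -- integrability of w^4 and f^2
  have hw4m : AEStronglyMeasurable (fun x => w x ^ 4) (volume : Measure (EuclideanSpace ℝ (Fin 2))) :=
    (hwc.pow 4).aestronglyMeasurable
  have hw4int : Integrable (fun x => w x ^ 4) (volume : Measure (EuclideanSpace ℝ (Fin 2))) := by
    refine ⟨hw4m, ?_⟩
    rw [hasFiniteIntegral_iff_ofReal (Filter.Eventually.of_forall fun x => by positivity)]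
    exact hW4fin.lt_top
  have hf2int : Integrable (fun x => f x ^ 2) (volume : Measure (EuclideanSpace ℝ (Fin 2))) := by
    refine (hf.add (hw4int.const_mul 36)).mono'
      (hf.aestronglyMeasurable.pow 2)
      (Filter.Eventually.of_forall fun x => ?_)
    rw [Real.norm_eq_abs, abs_of_nonneg (by positivity)]
    simpa using hpt x
  have hmem : MemLp f 2 (volume : Measure (EuclideanSpace ℝ (Fin 2))) :=
    (memLp_two_iff_integrable_sq hf.aestronglyMeasurable).mpr hf2int
  refine ⟨hmem, ?_⟩
  -- the integral inequality
  have hint1 : ∫ x, f x ^ 2 ≤ (∫ x, f x) + 36 * ∫ x, w x ^ 4 := by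
    have h1 : ∫ x, f x ^ 2 ≤ ∫ x, (f x + 36 * w x ^ 4) :=
      integral_mono hf2int (hf.add (hw4int.const_mul 36)) hpt
    rwa [integral_add hf (hw4int.const_mul 36), integral_const_mul] at h1
  have hw4val : ∫ x, w x ^ 4 = W4.toReal := by
    rw [hW4, integral_eq_lintegral_of_nonneg_ae
      (Filter.Eventually.of_forall fun x => by positivity) hw4m]
  have hIf_nn : 0 ≤ ∫ x, f x := integral_nonneg hnn
  have hfinal : W4.toReal ≤ 16 * (∫ x, f x) * S.toReal ^ 2 := by
    have h1 : W4.toReal ≤ (16 * A * B).toReal := by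
      refine ENNReal.toReal_mono ?_ hmain
      exact ENNReal.mul_ne_top (ENNReal.mul_ne_top (by norm_num) hAfin) hBfin
    have h2 : (16 * A * B).toReal = 16 * A.toReal * B.toReal := by
      rw [ENNReal.toReal_mul, ENNReal.toReal_mul]
      norm_num
    have h3 : A.toReal ≤ ∫ x, f x := by
      have := ENNReal.toReal_mono ENNReal.ofReal_ne_top hAle
      rwa [ENNReal.toReal_ofReal hIf_nn] at this
    have h4 : B.toReal = S.toReal ^ 2 := by rw [hBS, ENNReal.toReal_pow]
    have h5 : 0 ≤ B.toReal := ENNReal.toReal_nonneg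
    have h6 : 0 ≤ A.toReal := ENNReal.toReal_nonneg
    calc W4.toReal ≤ 16 * A.toReal * B.toReal := by rw [← h2]; exact h1
      _ ≤ 16 * (∫ x, f x) * B.toReal := by nlinarith
      _ = 16 * (∫ x, f x) * S.toReal ^ 2 := by rw [h4]
  have hSnn : (0:ℝ) ≤ S.toReal ^ 2 := sq_nonneg _
  calc ∫ x, f x ^ 2 ≤ (∫ x, f x) + 36 * ∫ x, w x ^ 4 := hint1
    _ ≤ (∫ x, f x) + 36 * (16 * (∫ x, f x) * S.toReal ^ 2) := by
        rw [hw4val]; nlinarith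
    _ ≤ (∫ x, f x) + 576 * ((∫ x, f x) + 1) * S.toReal ^ 2 := by nlinarith
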